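/- Let D be a countable set. Any word W in the set W(D) of infinitary words over D (functions from a countable linearly ordered set to D ⊔ D⁻ in which each letter occurs only finitely often) is equivalent to the empty word — meaning that for every finite subset F of D, the finite word W_F obtained by keeping only letters from F evaluates to the identity of the free group on F — if and only if there exists a noncrossing inverse pairing Γ on the index set of W with ⋃Γ equal to the whole index set. -/

import Mathlib

noncomputable section

namespace EarringPaper

/-- An infinitary word over the alphabet `D`: a function from a countable linearly
ordered index set to the letters `a`/`a⁻` (`(a, true)`/`(a, false)`), in which each
letter occurs only finitely often. -/
structure InfWord (D : Type*) where
  ι : Type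
  [ord : LinearOrder ι]
  [cnt : Countable ι]
  letter : ι → D × Bool
  finOcc : ∀ a : D, {i : ι | (letter i).1 = a}.Finite

attribute [instance] InfWord.ord InfWord.cnt

variable {D : Type*}

lemma InfWord.finF (W : InfWord D) (F : Finset D) :
    {i : W.ι | (W.letter i).1 ∈ F}.Finite := by
  have h : {i : W.ι | (W.letter i).1 ∈ F} = ⋃ a ∈ F, {i : W.ι | (W.letter i).1 = a} := by
    ext i; simp
  rw [h]
  exact F.finite_toSet.biUnion fun a _ => W.finOcc a

/-- The finite word `W_F`: the restriction of `W` to the letters from the finite set `F`,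
evaluated as an element of the free group on `D`. -/
def InfWord.evalF (W : InfWord D) (F : Finset D) : FreeGroup D :=
  (((W.finF F).toFinset.sort (· ≤ ·)).map fun i => FreeGroup.mk [W.letter i]).prod

/-- `W` is equivalent to the empty word: all its finite restrictions `W_F` are trivial. -/
def InfWord.IsNull (W : InfWord D) : Prop := ∀ F : Finset D, W.evalF F = 1

/-- The subword of `W` supported on a set `S` of indices. -/
def InfWord.restrict (W : InfWord D) (S : Set W.ι) : InfWord D where
  ι := S
  letter i := W.letter i.val
  finOcc a := by
    have h : {i : S | (W.letter i.val).1 = a} =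
        Subtype.val ⁻¹' {i : W.ι | (W.letter i).1 = a} := rfl
    rw [h]
    exact (W.finOcc a).preimage Subtype.val_injective.injOn

/-- An order-convex set of indices (the support of a subword). -/
def IsConvexSub {W : InfWord D} (S : Set W.ι) : Prop :=
  ∀ i ∈ S, ∀ j ∈ S, ∀ k, i ≤ k → k ≤ j → k ∈ S

/-- An infinitary word is reduced if no nonempty subword is equivalent to the empty word. -/
def InfWord.Reduced (W : InfWord D) : Prop :=
  ∀ S : Set W.ι, S.Nonempty → IsConvexSub S → ¬(W.restrict S).IsNull

/-- A noncrossing inverse pairing on the infinitary word `W`. -/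
structure InfNCIP (W : InfWord D) (Γ : Set (W.ι × W.ι)) : Prop where
  lt : ∀ p ∈ Γ, p.1 < p.2
  inv : ∀ p ∈ Γ, (W.letter p.1).1 = (W.letter p.2).1 ∧
    (W.letter p.1).2 = !(W.letter p.2).2
  disj : ∀ p ∈ Γ, ∀ q ∈ Γ, p ≠ q → p.1 ≠ q.1 ∧ p.1 ≠ q.2 ∧ p.2 ≠ q.1 ∧ p.2 ≠ q.2
  noncross : ∀ p ∈ Γ, ∀ q ∈ Γ, ¬(p.1 < q.1 ∧ q.1 < p.2 ∧ p.2 < q.2)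
  covered : ∀ p ∈ Γ, ∀ k, p.1 ≤ k → k ≤ p.2 → ∃ q ∈ Γ, q.1 = k ∨ q.2 = k

end EarringPaper

/-! A finite word has a complete noncrossing inverse pairing exactly when it freely reduces to
the empty word: a pairing is peeled off along the pair of the first letter, which splits the
word into the part it encloses and the part after it; conversely every free reduction cancels
two adjacent letters, and that pair can be added to a pairing of the shorter word.

An infinitary word is therefore null iff every finite restriction `W_F` carries such a pairing,
encoded as a partner involution on the indices with letters in `F`. Since every letter occurs
only finitely often, the partner of a fixed index ranges over a finite set, so these involutions
converge along an ultrafilter on the finite subsets of `D` finer than `atTop`. Each defining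
condition of a pairing involves only finitely many indices, hence passes to the limit. -/

namespace EarringPaper

open FreeGroup Set

section SortedWord

variable {ι D : Type*} [LinearOrder ι]

lemma sort_union_of_lt {s t : Finset ι} (h : ∀ a ∈ s, ∀ b ∈ t, a < b) :
    (s ∪ t).sort (· ≤ ·) = s.sort (· ≤ ·) ++ t.sort (· ≤ ·) := by
  have hnodup : (s.sort (· ≤ ·) ++ t.sort (· ≤ ·)).Nodup :=
    List.nodup_append.2 ⟨Finset.sort_nodup _ _, Finset.sort_nodup _ _,
      fun a ha b hb => (h a (by simpa using ha) b (by simpa using hb)).ne⟩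
  have hsorted := (List.toFinset_sort (· ≤ ·) hnodup).2 <| List.pairwise_append.2
    ⟨Finset.pairwise_sort _ _, Finset.pairwise_sort _ _,
      fun a ha b hb => (h a (by simpa using ha) b (by simpa using hb)).le⟩
  rwa [List.toFinset_append, Finset.sort_toFinset, Finset.sort_toFinset] at hsorted

def sortedWord (w : ι → D × Bool) (s : Finset ι) : List (D × Bool) :=
  (s.sort (· ≤ ·)).map w

lemma sortedWord_union_of_lt (w : ι → D × Bool) {s t : Finset ι}
    (h : ∀ a ∈ s, ∀ b ∈ t, a < b) :
    sortedWord w (s ∪ t) = sortedWord w s ++ sortedWord w t := by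
  rw [sortedWord, sort_union_of_lt h, List.map_append, sortedWord, sortedWord]

@[simp] lemma sortedWord_singleton (w : ι → D × Bool) (a : ι) : sortedWord w {a} = [w a] := by
  simp [sortedWord]

lemma sortedWord_eq_of_isLeast (w : ι → D × Bool) {s : Finset ι} {m M : ι}
    (hm : IsLeast (s : Set ι) m) (hM : M ∈ s) (hmM : m < M) :
    sortedWord w s = [w m] ++ sortedWord w (s.filter (· ∈ Ioo m M)) ++
      ([w M] ++ sortedWord w (s.filter (· ∈ Ioi M))) := by
  have hs : s = ({m} ∪ s.filter (· ∈ Ioo m M)) ∪ ({M} ∪ s.filter (· ∈ Ioi M)) := by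
    ext k
    simp only [Finset.mem_union, Finset.mem_singleton, Finset.mem_filter, mem_Ioo, mem_Ioi]
    have hmk : k ∈ s → m ≤ k := fun hk => hm.2 hk
    grind [hm.1]
  conv_lhs => rw [hs]
  rw [sortedWord_union_of_lt, sortedWord_union_of_lt, sortedWord_union_of_lt,
    sortedWord_singleton, sortedWord_singleton]
  all_goals
    simp only [Finset.mem_union, Finset.mem_singleton, Finset.mem_filter, mem_Ioo, mem_Ioi]
    grind

end SortedWord

lemma mk_eq_one_iff_red_nil {α : Type*} {L : List (α × Bool)} :
    FreeGroup.mk L = 1 ↔ Red L [] := by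
  rw [one_eq_mk, Red.exact]
  exact ⟨fun ⟨c, hL, hc⟩ => Red.nil_iff.1 hc ▸ hL, fun h => ⟨[], h, Red.refl⟩⟩

section Pairing

variable {D : Type*}

def letterInv (x : D × Bool) : D × Bool := (x.1, !x.2)

@[simp] lemma letterInv_letterInv (x : D × Bool) : letterInv (letterInv x) = x := by
  simp [letterInv]

lemma mk_letterInv (x : D × Bool) : FreeGroup.mk [letterInv x] = (FreeGroup.mk [x])⁻¹ := by
  simp [letterInv, inv_mk, invRev]

variable {ι : Type*} [LinearOrder ι]

/-- A noncrossing inverse pairing covering `S`, encoded by the involution `P` that sends every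
index of `S` to its partner. In `noncross`, the crossing `P j < i < j < P i` is the instance
`(P j, i)` of the condition. -/
structure IsNoncrossingPairing (w : ι → D × Bool) (S : Set ι) (P : ι → ι) : Prop where
  mapsTo : MapsTo P S S
  ne : ∀ i ∈ S, P i ≠ i
  invol : ∀ i ∈ S, P (P i) = i
  letter : ∀ i ∈ S, w (P i) = letterInv (w i)
  noncross : ∀ i ∈ S, ∀ j ∈ S, i < j → j < P i → P i < P j → False

namespace IsNoncrossingPairing

variable {w : ι → D × Bool} {S T : Set ι} {P : ι → ι}

lemma empty (w : ι → D × Bool) (P : ι → ι) : IsNoncrossingPairing w ∅ P :=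
  ⟨mapsTo_empty _ _, by simp, by simp, by simp, by simp⟩

lemma mono (h : IsNoncrossingPairing w S P) (hTS : T ⊆ S) (hT : MapsTo P T T) :
    IsNoncrossingPairing w T P :=
  ⟨hT, fun i hi => h.ne i (hTS hi), fun i hi => h.invol i (hTS hi),
    fun i hi => h.letter i (hTS hi), fun i hi j hj => h.noncross i (hTS hi) j (hTS hj)⟩

lemma restrict_letters (h : IsNoncrossingPairing w univ P) (A : Set D) :
    IsNoncrossingPairing w {i | (w i).1 ∈ A} P :=
  h.mono (subset_univ _) fun i hi => by simpa [h.letter i trivial, letterInv] using hi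

lemma mapsTo_Ioo (h : IsNoncrossingPairing w S P) {i : ι} (hi : i ∈ S) :
    MapsTo P (S ∩ Ioo i (P i)) (S ∩ Ioo i (P i)) := by
  rintro k ⟨hk, hik, hkP⟩
  refine ⟨h.mapsTo hk, ?_, ?_⟩
  · by_contra! hPk
    rcases hPk.lt_or_eq with hPk | hPk
    · exact h.noncross _ (h.mapsTo hk) i hi hPk (by rwa [h.invol k hk]) (by rwa [h.invol k hk])
    · exact hkP.ne (by rw [← h.invol k hk, hPk])
  · by_contra! hPk
    rcases hPk.lt_or_eq with hPk | hPk
    · exact h.noncross i hi k hk hik hkP hPk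
    · exact hik.ne (by rw [← h.invol k hk, ← hPk, h.invol i hi])

lemma insert_adjacent (h : IsNoncrossingPairing w T P) {a c : ι} (hac : a < c)
    (hw : w c = letterInv (w a)) (hadj : ∀ k ∈ T, k < a ∨ c < k) :
    IsNoncrossingPairing w (insert a (insert c T))
      (fun i => if i = a then c else if i = c then a else P i) := by
  set P' := fun i => if i = a then c else if i = c then a else P i
  have hPa : P' a = c := by simp [P']
  have hPc : P' c = a := by simp [P', hac.ne']
  have hPT : ∀ i ∈ T, P' i = P i := fun i hi => by
    have : i ≠ a ∧ i ≠ c := by rcases hadj i hi with h | h <;> constructor <;> order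
    simp [P', this]
  refine ⟨?_, ?_, ?_, ?_, ?_⟩
  · rintro i (rfl | rfl | hi)
    · simp [hPa]
    · simp [hPc]
    · simp [hPT i hi, h.mapsTo hi]
  · rintro i (rfl | rfl | hi)
    · simp [hPa, hac.ne']
    · simp [hPc, hac.ne]
    · simp [hPT i hi, h.ne i hi]
  · rintro i (rfl | rfl | hi)
    · simp [hPa, hPc]
    · simp [hPa, hPc]
    · simp [hPT i hi, hPT _ (h.mapsTo hi), h.invol i hi]
  · rintro i (rfl | rfl | hi)
    · simp [hPa, hw]
    · simp [hPc, hw]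
    · simp [hPT i hi, h.letter i hi]
  · rintro i (rfl | rfl | hi) j hj hij hjP hPP
    · rw [hPa] at hjP
      rcases hj with rfl | rfl | hj
      · order
      · order
      · rcases hadj j hj with h | h <;> order
    · rw [hPc] at hjP
      order
    · rw [hPT i hi] at hjP hPP
      rcases hj with rfl | rfl | hj
      · rw [hPa] at hPP
        rcases hadj _ (h.mapsTo hi) with h' | h' <;> order
      · rw [hPc] at hPP
        order
      · rw [hPT j hj] at hPP
        exact h.noncross i hi j hj hij hjP hPP

lemma mapsTo_Ioi (h : IsNoncrossingPairing w S P) {m : ι} (hm : IsLeast S m) :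
    MapsTo P (S ∩ Ioi (P m)) (S ∩ Ioi (P m)) := by
  rintro k ⟨hk, hmk⟩
  have hPk := h.mapsTo hk
  refine ⟨hPk, lt_of_not_ge fun hle => ?_⟩
  rcases hle.lt_or_eq with hlt | heq
  · rcases (hm.2 hPk).lt_or_eq with hgt | heq'
    · have := (h.mapsTo_Ioo hm.1 ⟨hPk, hgt, hlt⟩).2
      rw [h.invol k hk] at this
      exact lt_asymm hmk this.2
    · rw [heq', h.invol k hk] at hmk
      exact lt_irrefl k hmk
  · have : k = m := by rw [← h.invol k hk, heq, h.invol m hm.1]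
    rw [this] at hmk
    exact absurd hmk (not_lt.2 (hm.2 (h.mapsTo hm.1)))

lemma mk_sortedWord_eq_one {s : Finset ι} (h : IsNoncrossingPairing w s P) :
    FreeGroup.mk (sortedWord w s) = 1 := by
  induction s using Finset.strongInduction with
  | H s ih =>
  rcases s.eq_empty_or_nonempty with rfl | hs
  · simp [sortedWord, one_eq_mk]
  set m := s.min' hs
  have hm : IsLeast (s : Set ι) m := s.isLeast_min' hs
  have hmP : m < P m := (hm.2 (h.mapsTo hm.1)).lt_of_ne (h.ne m hm.1).symm
  have hpiece : ∀ (p : ι → Prop) [DecidablePred p],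
      MapsTo P (s ∩ {k | p k}) (s ∩ {k | p k}) → ¬ p m →
        FreeGroup.mk (sortedWord w (s.filter p)) = 1 := fun p _ hp hpm =>
    ih _ (Finset.filter_ssubset.2 ⟨m, hm.1, hpm⟩) <|
      h.mono (Finset.coe_subset.2 (Finset.filter_subset _ _)) (by rw [Finset.coe_filter]; exact hp)
  rw [sortedWord_eq_of_isLeast w hm (h.mapsTo hm.1) hmP, ← mul_mk, ← mul_mk, ← mul_mk,
    hpiece (· ∈ Ioo m (P m)) (h.mapsTo_Ioo hm.1) (fun hmm => lt_irrefl m hmm.1),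
    hpiece (· ∈ Ioi (P m)) (h.mapsTo_Ioi hm) (lt_asymm hmP), h.letter m hm.1, mk_letterInv,
    mul_one, mul_one, mul_inv_cancel]

end IsNoncrossingPairing

end Pairing

section Reduction

variable {ι D : Type*} [LinearOrder ι] {w : ι → D × Bool}

lemma exists_adjacent_inverse_pair {s : Finset ι} (hs : s.Nonempty)
    (h : Red (sortedWord w s) []) :
    ∃ a c t, a < c ∧ w c = letterInv (w a) ∧ s = insert a (insert c t) ∧
      (∀ k ∈ t, k < a ∨ c < k) ∧ Red (sortedWord w t) [] := by
  obtain ⟨L, hstep, hred⟩ : ∃ L, Red.Step (sortedWord w s) L ∧ Red L [] :=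
    h.cases_head.resolve_left fun h0 =>
      hs.ne_empty (by simpa [sortedWord] using congrArg List.length h0)
  generalize hsw : sortedWord w s = L₀ at hstep
  obtain @⟨L₁, L₂, x, b⟩ := hstep
  obtain ⟨l₁, l', hsort, rfl, hl'⟩ := List.map_eq_append_iff.1 hsw
  obtain ⟨a, l'', rfl, hwa, hl''⟩ := List.map_eq_cons_iff.1 hl'
  obtain ⟨c, l₂, rfl, hwc, rfl⟩ := List.map_eq_cons_iff.1 hl''
  have hlt : (l₁ ++ a :: c :: l₂).Pairwise (· < ·) := hsort ▸ (Finset.sortedLT_sort s).pairwise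
  simp only [List.pairwise_append, List.pairwise_cons, List.mem_cons, forall_eq_or_imp] at hlt
  obtain ⟨hl₁, ⟨⟨hac, -⟩, hc₂, hl₂⟩, hl₁₂⟩ := hlt
  have hsorted : (l₁ ++ l₂).Pairwise (· < ·) :=
    List.pairwise_append.2 ⟨hl₁, hl₂, fun x hx y hy => (hl₁₂ x hx).2.2 y hy⟩
  refine ⟨a, c, (l₁ ++ l₂).toFinset, hac, by simp [letterInv, hwa, hwc], ?_, ?_, ?_⟩
  · conv_lhs => rw [← s.sort_toFinset (· ≤ ·), hsort]
    ext k
    simp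
  · intro k hk
    rcases List.mem_append.1 (List.mem_toFinset.1 hk) with hk | hk
    exacts [.inl (hl₁₂ k hk).1, .inr (hc₂ k hk)]
  · have : (l₁ ++ l₂).toFinset.sort (· ≤ ·) = l₁ ++ l₂ :=
      (List.toFinset_sort _ (hsorted.imp ne_of_lt)).2 (hsorted.imp le_of_lt)
    rwa [sortedWord, this, List.map_append]

theorem exists_isNoncrossingPairing_of_red {s : Finset ι} (h : Red (sortedWord w s) []) :
    ∃ P, IsNoncrossingPairing w s P := by
  induction s using Finset.strongInduction with
  | H s ih =>
  rcases s.eq_empty_or_nonempty with rfl | hs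
  · exact ⟨id, by simpa using IsNoncrossingPairing.empty w id⟩
  obtain ⟨a, c, t, hac, hw, rfl, hadj, ht⟩ := exists_adjacent_inverse_pair hs h
  have hat : a ∉ insert c t := by
    rw [Finset.mem_insert]
    rintro (rfl | hat)
    · exact lt_irrefl a hac
    · rcases hadj a hat with h | h <;> order
  obtain ⟨P, hP⟩ := ih t ((Finset.subset_insert c t).trans_ssubset (Finset.ssubset_insert hat)) ht
  exact ⟨_, by simpa using hP.insert_adjacent hac hw hadj⟩

theorem mk_sortedWord_eq_one_iff {s : Finset ι} :
    FreeGroup.mk (sortedWord w s) = 1 ↔ ∃ P, IsNoncrossingPairing w s P :=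
  ⟨fun h => exists_isNoncrossingPairing_of_red (mk_eq_one_iff_red_nil.1 h),
    fun ⟨_, hP⟩ => hP.mk_sortedWord_eq_one⟩

end Reduction

lemma Ultrafilter.exists_eventually_eq_of_finite {α β : Type*} {U : Ultrafilter α} {g : α → β}
    {T : Set β} (hT : T.Finite) (h : ∀ᶠ x in (U : Filter α), g x ∈ T) :
    ∃ b, ∀ᶠ x in (U : Filter α), g x = b := by
  have hcover : {x | g x ∈ T} ⊆ ⋃ b ∈ T, {x | g x = b} := fun x hx => mem_biUnion hx rfl
  obtain ⟨b, -, hb⟩ := (Ultrafilter.finite_biUnion_mem_iff hT).1 (Filter.mem_of_superset h hcover)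
  exact ⟨b, hb⟩

section Limit

variable {ι D : Type*} [LinearOrder ι] {w : ι → D × Bool}

theorem exists_isNoncrossingPairing_univ (hw : ∀ a, {i | (w i).1 = a}.Finite)
    (h : ∀ F : Finset D, ∃ P, IsNoncrossingPairing w {i | (w i).1 ∈ F} P) :
    ∃ P, IsNoncrossingPairing w univ P := by
  classical
  choose Q hQ using h
  obtain ⟨U, hU⟩ := Ultrafilter.exists_le (Filter.atTop : Filter (Finset D))
  have hmem : ∀ i, ∀ᶠ F in (U : Filter (Finset D)), (w i).1 ∈ F := fun i =>
    hU <| (Filter.eventually_ge_atTop {(w i).1}).mono fun F hF =>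
      hF (Finset.mem_singleton_self _)
  have hlim : ∀ i, ∃ j, ∀ᶠ F in (U : Filter (Finset D)), (w i).1 ∈ F ∧ Q F i = j := by
    intro i
    obtain ⟨j, hj⟩ := Ultrafilter.exists_eventually_eq_of_finite (g := fun F => Q F i)
      (hw (w i).1) ((hmem i).mono fun F hF => by simp [(hQ F).letter i hF, letterInv])
    exact ⟨j, (hmem i).and hj⟩
  choose P hP using hlim
  refine ⟨P, mapsTo_univ _ _, fun i _ => ?_, fun i _ => ?_, fun i _ => ?_,
    fun i _ j _ => ?_⟩
  · obtain ⟨F, hiF, hFi⟩ := (hP i).exists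
    exact hFi ▸ (hQ F).ne i hiF
  · obtain ⟨F, ⟨hiF, hFi⟩, -, hFPi⟩ := ((hP i).and (hP (P i))).exists
    rw [← hFPi, ← hFi]
    exact (hQ F).invol i hiF
  · obtain ⟨F, hiF, hFi⟩ := (hP i).exists
    exact hFi ▸ (hQ F).letter i hiF
  · obtain ⟨F, ⟨hiF, hFi⟩, hjF, hFj⟩ := ((hP i).and (hP j)).exists
    rw [← hFi, ← hFj]
    exact (hQ F).noncross i hiF j hjF

end Limit

namespace InfWord

variable {D : Type*} (W : InfWord D)

lemma evalF_eq_mk (F : Finset D) :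
    W.evalF F = FreeGroup.mk (sortedWord W.letter (W.finF F).toFinset) := by
  rw [evalF, sortedWord]
  induction (W.finF F).toFinset.sort (· ≤ ·) with
  | nil => rfl
  | cons i l ih => rw [List.map_cons, List.prod_cons, ih, List.map_cons, mul_mk]; rfl

theorem evalF_eq_one_iff (F : Finset D) :
    W.evalF F = 1 ↔ ∃ P, IsNoncrossingPairing W.letter {i | (W.letter i).1 ∈ F} P := by
  rw [evalF_eq_mk, mk_sortedWord_eq_one_iff, Set.Finite.coe_toFinset]

end InfWord

def pairSet {ι : Type*} [LinearOrder ι] (P : ι → ι) : Set (ι × ι) :=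
  {p | p.1 < p.2 ∧ P p.1 = p.2}

lemma IsNoncrossingPairing.exists_mem_pairSet {ι D : Type*} [LinearOrder ι]
    {w : ι → D × Bool} {P : ι → ι} (h : IsNoncrossingPairing w univ P) (i : ι) :
    ∃ p ∈ pairSet P, p.1 = i ∨ p.2 = i := by
  rcases lt_trichotomy i (P i) with hi | hi | hi
  · exact ⟨(i, P i), ⟨hi, rfl⟩, .inl rfl⟩
  · exact absurd hi.symm (h.ne i trivial)
  · exact ⟨(P i, i), ⟨hi, h.invol i trivial⟩, .inr rfl⟩

section Pairs

variable {D : Type*} {W : InfWord D}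

namespace IsNoncrossingPairing

variable {P : W.ι → W.ι}

lemma infNCIP_pairSet (h : IsNoncrossingPairing W.letter univ P) : InfNCIP W (pairSet P) where
  lt _ hp := hp.1
  inv p := by
    rintro ⟨-, hp⟩
    rw [← hp, h.letter _ trivial]
    simp [letterInv]
  disj := by
    rintro p ⟨hp, hPp⟩ q ⟨hq, hPq⟩ hne
    have hPp' : P p.2 = p.1 := hPp ▸ h.invol _ trivial
    have hPq' : P q.2 = q.1 := hPq ▸ h.invol _ trivial
    refine ⟨fun e => hne (Prod.ext e ?_), fun e => ?_, fun e => ?_, fun e => hne (Prod.ext ?_ e)⟩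
    · rw [← hPp, ← hPq, e]
    · have : p.2 = q.1 := by rw [← hPp, e, hPq']
      order
    · have : q.2 = p.1 := by rw [← hPq, ← e, hPp']
      order
    · rw [← hPp', ← hPq', e]
  noncross := by
    rintro p ⟨-, hPp⟩ q ⟨-, hPq⟩ ⟨h₁, h₂, h₃⟩
    exact h.noncross p.1 trivial q.1 trivial h₁ (hPp ▸ h₂) (hPp ▸ hPq ▸ h₃)
  covered _ _ k _ _ := h.exists_mem_pairSet k

end IsNoncrossingPairing

namespace InfNCIP

variable {Γ : Set (W.ι × W.ι)}

lemma eq_of_mem_of_mem (hΓ : InfNCIP W Γ) {p q : W.ι × W.ι} (hp : p ∈ Γ) (hq : q ∈ Γ)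
    (h : p.1 = q.1 ∨ p.1 = q.2 ∨ p.2 = q.1 ∨ p.2 = q.2) : p = q := by
  by_contra hne
  have := hΓ.disj p hp q hq hne
  tauto

lemma partner_unique (hΓ : InfNCIP W Γ) {i j k : W.ι} (hj : (i, j) ∈ Γ ∨ (j, i) ∈ Γ)
    (hk : (i, k) ∈ Γ ∨ (k, i) ∈ Γ) : j = k := by
  rcases hj with hj | hj <;> rcases hk with hk | hk
  · exact (Prod.ext_iff.1 (hΓ.eq_of_mem_of_mem hj hk (.inl rfl))).2
  · have := Prod.ext_iff.1 (hΓ.eq_of_mem_of_mem hj hk (.inr (.inl rfl)))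
    exact this.2.trans this.1
  · have := Prod.ext_iff.1 (hΓ.eq_of_mem_of_mem hj hk (.inr (.inr (.inl rfl))))
    exact this.1.trans this.2
  · exact (Prod.ext_iff.1 (hΓ.eq_of_mem_of_mem hj hk (.inr (.inr (.inr rfl))))).1

theorem exists_isNoncrossingPairing (hΓ : InfNCIP W Γ)
    (hcov : ∀ i, ∃ p ∈ Γ, p.1 = i ∨ p.2 = i) : ∃ P, IsNoncrossingPairing W.letter univ P := by
  have hpartner : ∀ i, ∃ j, (i, j) ∈ Γ ∨ (j, i) ∈ Γ := by
    intro i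
    obtain ⟨p, hp, rfl | rfl⟩ := hcov i
    exacts [⟨p.2, .inl hp⟩, ⟨p.1, .inr hp⟩]
  choose P hP using hpartner
  have hfwd : ∀ i, i < P i → (i, P i) ∈ Γ := fun i hi =>
    (hP i).resolve_right fun h => lt_asymm hi (hΓ.lt _ h)
  refine ⟨P, mapsTo_univ _ _, fun i _ => ?_, fun i _ => hΓ.partner_unique (hP (P i)) (hP i).symm,
    fun i _ => ?_, fun i _ j _ hij hjP hPP => ?_⟩
  · rcases hP i with h | h
    exacts [(hΓ.lt _ h).ne', (hΓ.lt _ h).ne]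
  · rcases hP i with h | h <;> obtain ⟨h₁, h₂⟩ := hΓ.inv _ h
    · exact Prod.ext h₁.symm (by simp [letterInv, h₂])
    · exact Prod.ext h₁ h₂
  · exact hΓ.noncross _ (hfwd i (hij.trans hjP)) _ (hfwd j (hjP.trans hPP)) ⟨hij, hjP, hPP⟩

end InfNCIP

end Pairs

theorem infword_null_iff_exists_ncip_general {D : Type*} (W : InfWord D) :
    W.IsNull ↔ ∃ Γ : Set (W.ι × W.ι), InfNCIP W Γ ∧
      ∀ i : W.ι, ∃ p ∈ Γ, p.1 = i ∨ p.2 = i := by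
  constructor
  · intro hnull
    obtain ⟨P, hP⟩ := exists_isNoncrossingPairing_univ W.finOcc fun F =>
      (W.evalF_eq_one_iff F).1 (hnull F)
    exact ⟨pairSet P, hP.infNCIP_pairSet, hP.exists_mem_pairSet⟩
  · rintro ⟨Γ, hΓ, hcov⟩ F
    obtain ⟨P, hP⟩ := hΓ.exists_isNoncrossingPairing hcov
    exact (W.evalF_eq_one_iff F).2 ⟨P, hP.restrict_letters F⟩

/-- (Cannon–Conner) An infinitary word over a countable alphabet `D` is equivalent to the
empty word if and only if it carries a noncrossing inverse pairing whose union is the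
whole index set. -/
theorem infword_null_iff_exists_ncip {D : Type*} [Countable D] (W : InfWord D) :
    W.IsNull ↔ ∃ Γ : Set (W.ι × W.ι), InfNCIP W Γ ∧
      ∀ i : W.ι, ∃ p ∈ Γ, p.1 = i ∨ p.2 = i :=
  infword_null_iff_exists_ncip_general W

end EarringPaper
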